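/- arXiv:1904.08330 — 2 statements merged into one kernel-verified Lean document; each statement's English description precedes it below -/
import Mathlib

section
/- Let (P1) be the linear program min { c·z : Az ≥ b, z ≥ 0 } with a finite optimum, let α* be an optimal dual solution for the constraints Az ≥ b, and let ᾱ ≥ α* (componentwise, with ᾱ ≥ 0). Then the optimization problem (P2) min { c·z + ᾱ·(b − Az)⁺ : z ≥ 0 }, where (b − Az)⁺ denotes the componentwise positive part, has the same optimal value as (P1). -/
/-!
Every point of `(P2)` is bounded below by the dual objective: for `z ≥ 0`,
`b·α* = α*·(b − Az) + (α*A)·z ≤ ᾱ·(b − Az)⁺ + c·z`, using `0 ≤ α* ≤ ᾱ` and dual feasibility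
`α*A ≤ c`. By strong duality this bound is `c·z*`, and `z*` attains it in `(P2)` because its
penalty vanishes.
-/

open Matrix

section

variable {ι κ R : Type*} [Fintype ι] [Fintype κ]

theorem dotProduct_le_dotProduct_max_zero [Semiring R] [LinearOrder R] [IsOrderedRing R]
    {α ᾱ v : ι → R} (hα : 0 ≤ α) (hαᾱ : α ≤ ᾱ) :
    α ⬝ᵥ v ≤ ᾱ ⬝ᵥ fun i => max (v i) 0 :=
  (dotProduct_le_dotProduct_of_nonneg_left (fun _ => le_max_left _ _) hα).trans
    (dotProduct_le_dotProduct_of_nonneg_right hαᾱ fun _ => le_max_right _ _)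

variable [CommRing R] [LinearOrder R] [IsStrictOrderedRing R]

theorem dual_objective_le_penalty_objective {A : Matrix ι κ R} {b : ι → R} {c z : κ → R}
    {α ᾱ : ι → R} (hα : 0 ≤ α) (hα_feas : α ᵥ* A ≤ c) (hαᾱ : α ≤ ᾱ) (hz : 0 ≤ z) :
    b ⬝ᵥ α ≤ c ⬝ᵥ z + ᾱ ⬝ᵥ fun i => max (b i - (A *ᵥ z) i) 0 :=
  calc b ⬝ᵥ α = (α ᵥ* A) ⬝ᵥ z + α ⬝ᵥ (b - A *ᵥ z) := by
        rw [dotProduct_sub, dotProduct_mulVec, dotProduct_comm b]; ring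
    _ ≤ c ⬝ᵥ z + ᾱ ⬝ᵥ fun i => max (b i - (A *ᵥ z) i) 0 :=
        add_le_add (dotProduct_le_dotProduct_of_nonneg_right hα_feas hz)
          (dotProduct_le_dotProduct_max_zero hα hαᾱ)

theorem penalty_eq_zero_of_feasible {A : Matrix ι κ R} {b : ι → R} {z : κ → R}
    (hz : b ≤ A *ᵥ z) (ᾱ : ι → R) :
    (ᾱ ⬝ᵥ fun i => max (b i - (A *ᵥ z) i) 0) = 0 := by
  have : (fun i => max (b i - (A *ᵥ z) i) 0) = 0 :=
    funext fun i => max_eq_right (sub_nonpos.mpr (hz i))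
  rw [this, dotProduct_zero]

end

theorem penalty_reformulation_same_optimal_value_general
    {m n : ℕ} (A : Matrix (Fin m) (Fin n) ℝ) (b : Fin m → ℝ) (c : Fin n → ℝ)
    (zstar : Fin n → ℝ) (αstar αbar : Fin m → ℝ)
    -- zstar is an optimal solution of (P1) (so (P1) has a finite optimum)
    (hz_nonneg : 0 ≤ zstar) (hz_feas : b ≤ A.mulVec zstar)
    -- αstar is an optimal dual solution: dual feasible and strong duality holds
    (hα_nonneg : 0 ≤ αstar) (hα_feas : A.vecMul αstar ≤ c)
    (h_strong_duality : b ⬝ᵥ αstar = c ⬝ᵥ zstar)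
    -- ᾱ upper-bounds αstar componentwise and is nonnegative
    (h_bound : αstar ≤ αbar) :
    IsLeast {v : ℝ | ∃ z : Fin n → ℝ, 0 ≤ z ∧
        v = c ⬝ᵥ z + αbar ⬝ᵥ (fun i => max (b i - A.mulVec z i) 0)}
      (c ⬝ᵥ zstar) := by
  refine ⟨⟨zstar, hz_nonneg, ?_⟩, ?_⟩
  · rw [penalty_eq_zero_of_feasible hz_feas, add_zero]
  · rintro v ⟨z, hz, rfl⟩
    rw [← h_strong_duality]
    exact dual_objective_le_penalty_objective hα_nonneg hα_feas h_bound hz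

/-- Lemma 1 (penalty reformulation): if `ᾱ` upper-bounds an optimal dual of
`(P1) min { c·z : Az ≥ b, z ≥ 0 }`, then
`(P2) min { c·z + ᾱ·(b − Az)⁺ : z ≥ 0 }` has the same optimal value. -/
theorem penalty_reformulation_same_optimal_value
    {m n : ℕ} (A : Matrix (Fin m) (Fin n) ℝ) (b : Fin m → ℝ) (c : Fin n → ℝ)
    (zstar : Fin n → ℝ) (αstar αbar : Fin m → ℝ)
    -- zstar is an optimal solution of (P1) (so (P1) has a finite optimum)
    (hz_nonneg : 0 ≤ zstar) (hz_feas : b ≤ A.mulVec zstar)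
    (hz_opt : ∀ z : Fin n → ℝ, 0 ≤ z → b ≤ A.mulVec z → c ⬝ᵥ zstar ≤ c ⬝ᵥ z)
    -- αstar is an optimal dual solution: dual feasible and strong duality holds
    (hα_nonneg : 0 ≤ αstar) (hα_feas : A.vecMul αstar ≤ c)
    (h_strong_duality : b ⬝ᵥ αstar = c ⬝ᵥ zstar)
    -- ᾱ upper-bounds αstar componentwise and is nonnegative
    (h_bound : αstar ≤ αbar) (h_bar_nonneg : 0 ≤ αbar) :
    IsLeast {v : ℝ | ∃ z : Fin n → ℝ, 0 ≤ z ∧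
        v = c ⬝ᵥ z + αbar ⬝ᵥ (fun i => max (b i - A.mulVec z i) 0)}
      (c ⬝ᵥ zstar) :=
  penalty_reformulation_same_optimal_value_general A b c zstar αstar αbar hz_nonneg hz_feas
    hα_nonneg hα_feas h_strong_duality h_bound
end

section
/- In the single-commodity flow formulation of the topological interdiction set, if a feasible solution exists then the set of interdicted edges { (i,j) : x_{ij} = 1 } together with their endpoints forms a subgraph in which every endpoint of an interdicted edge is connected (via edges carrying positive virtual flow, hence via interdicted edges or the chosen dummy edge) to the bus i* with x_{κi*} = 1; in particular, the interdicted edges form a connected subgraph of the network. -/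
/-!
Let `S` be the set of buses reachable from an endpoint `u` of an interdicted line in the
interdicted subgraph, and suppose `i*` is not in `S`. A line leaving `S` is not interdicted, so
it carries no virtual flow, and summing the flow balance over `S` gives
`∑_{i ∈ S} (y i - δκ i) = 0`. The dummy flow `δκ` vanishes off `i*`, whereas `y ≥ 1` on all of
`S` because every bus of `S` is an endpoint of an interdicted line: a contradiction.
-/

open Finset

/-- The subgraph formed by the interdicted lines `{(i,j) : x_{ij} = 1}`. -/
def interdictedGraph {nb : ℕ} (E : Finset (Fin nb × Fin nb))
    (x : Fin nb × Fin nb → ℝ) : SimpleGraph (Fin nb) where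
  Adj a b := a ≠ b ∧ (((a, b) ∈ E ∧ x (a, b) = 1) ∨ ((b, a) ∈ E ∧ x (b, a) = 1))
  symm := by
    constructor
    intro a b h
    exact ⟨h.1.symm, h.2.symm⟩
  loopless := by
    constructor
    intro a h
    exact h.1 rfl

section Flow

variable {V : Type*} [DecidableEq V]

def netInflow (E : Finset (V × V)) (f : V × V → ℝ) (i : V) : ℝ :=
  ∑ e ∈ E.filter (·.2 = i), f e - ∑ e ∈ E.filter (·.1 = i), f e

theorem sum_netInflow_eq_zero {E : Finset (V × V)} {f : V × V → ℝ} {S : Finset V}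
    (hcut : ∀ e ∈ E, f e ≠ 0 → (e.1 ∈ S ↔ e.2 ∈ S)) :
    ∑ i ∈ S, netInflow E f i = 0 := by
  simp only [netInflow, sum_sub_distrib]
  rw [sum_fiberwise_eq_sum_filter, sum_fiberwise_eq_sum_filter, sub_eq_zero, sum_filter,
    sum_filter]
  refine sum_congr rfl fun e he => ?_
  by_cases h : f e = 0
  · simp [h]
  · simp [hcut e he h]

end Flow

theorem Finset.eq_zero_of_sum_eq_of_ne {ι M : Type*} [AddCommMonoid M] [LinearOrder M]
    [IsOrderedCancelAddMonoid M] {s : Finset ι} {f : ι → M} (hf : ∀ i ∈ s, 0 ≤ f i)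
    {i₀ i : ι} (hi₀ : i₀ ∈ s) (hi : i ∈ s) (hne : i ≠ i₀) (hsum : ∑ j ∈ s, f j = f i₀) :
    f i = 0 :=
  (hf i hi).antisymm' <| not_lt.1 fun hpos =>
    (single_lt_sum hne hi₀ hi hpos fun j hj _ => hf j hj).ne' hsum

theorem dummyFlow_eq_zero_of_ne {ι : Type*} [Fintype ι] {k : ℕ} {xκ δκ : ι → ℝ}
    (hκone : ∑ i, xκ i = 1) (hδκ : ∀ i, 0 ≤ δκ i ∧ δκ i ≤ (k + 1 : ℝ) * xκ i)
    {istar i : ι} (histar : xκ istar = 1) (hne : i ≠ istar) : δκ i = 0 := by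
  have hxκ_nonneg (j : ι) : 0 ≤ xκ j :=
    nonneg_of_mul_nonneg_right ((hδκ j).1.trans (hδκ j).2) (by positivity)
  have hxκ : xκ i = 0 := eq_zero_of_sum_eq_of_ne (fun j _ => hxκ_nonneg j) (mem_univ istar)
    (mem_univ i) hne (hκone.trans histar.symm)
  exact le_antisymm (by simpa [hxκ] using (hδκ i).2) (hδκ i).1

theorem eq_one_of_flow_ne_zero {ι : Type*} {k : ℕ} {x f : ι → ℝ} {e : ι}
    (hxbin : x e = 0 ∨ x e = 1) (hf : 0 ≤ f e ∧ f e ≤ k * x e) (hne : f e ≠ 0) : x e = 1 :=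
  hxbin.resolve_left fun h0 => hne (le_antisymm (by simpa [h0] using hf.2) hf.1)

section InterdictedGraph

variable {nb : ℕ} {E : Finset (Fin nb × Fin nb)} {x : Fin nb × Fin nb → ℝ}

theorem interdictedGraph_reachable_of_mem {e : Fin nb × Fin nb} (he : e ∈ E) (hx : x e = 1) :
    (interdictedGraph E x).Reachable e.1 e.2 := by
  by_cases h : e.1 = e.2
  · rw [h]
  · exact SimpleGraph.Adj.reachable ⟨h, .inl ⟨he, hx⟩⟩

theorem exists_interdicted_of_interdictedGraph_adj {a b : Fin nb}
    (h : (interdictedGraph E x).Adj a b) : ∃ e ∈ E, x e = 1 ∧ (e.1 = a ∨ e.2 = a) := by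
  rcases h.2 with ⟨he, hx⟩ | ⟨he, hx⟩
  · exact ⟨_, he, hx, .inl rfl⟩
  · exact ⟨_, he, hx, .inr rfl⟩

theorem exists_interdicted_of_interdictedGraph_reachable {u v : Fin nb}
    (hu : ∃ e ∈ E, x e = 1 ∧ (e.1 = u ∨ e.2 = u)) (h : (interdictedGraph E x).Reachable u v) :
    ∃ e ∈ E, x e = 1 ∧ (e.1 = v ∨ e.2 = v) := by
  obtain ⟨p⟩ := h.symm
  cases p with
  | nil => exact hu
  | cons hadj _ => exact exists_interdicted_of_interdictedGraph_adj hadj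

end InterdictedGraph

theorem topological_flow_implies_connected_general
    {nb : ℕ} (E : Finset (Fin nb × Fin nb)) (k : ℕ)
    (x : Fin nb × Fin nb → ℝ) (y : Fin nb → ℝ) (xκ : Fin nb → ℝ)
    (δf δr : Fin nb × Fin nb → ℝ) (δκ : Fin nb → ℝ)
    (hxbin : ∀ e, x e = 0 ∨ x e = 1)
    (hκone : ∑ i, xκ i = 1)
    (haux : ∀ e ∈ E, x e ≤ y e.1 ∧ x e ≤ y e.2)
    (hδκ : ∀ i, 0 ≤ δκ i ∧ δκ i ≤ (k + 1 : ℝ) * xκ i)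
    (hδ : ∀ e ∈ E, (0 ≤ δf e ∧ δf e ≤ (k : ℝ) * x e) ∧
                    (0 ≤ δr e ∧ δr e ≤ (k : ℝ) * x e))
    (hbal : ∀ i : Fin nb,
      ((∑ e ∈ E.filter (fun e => e.2 = i), δf e) +
       (∑ e ∈ E.filter (fun e => e.1 = i), δr e)) -
      ((∑ e ∈ E.filter (fun e => e.1 = i), δf e) +
       (∑ e ∈ E.filter (fun e => e.2 = i), δr e)) = y i - δκ i)
    (istar : Fin nb) (histar : xκ istar = 1) :
    (∀ u : Fin nb, (∃ e ∈ E, x e = 1 ∧ (e.1 = u ∨ e.2 = u)) →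
      (interdictedGraph E x).Reachable u istar) ∧
    (∀ u v : Fin nb, (∃ e ∈ E, x e = 1 ∧ (e.1 = u ∨ e.2 = u)) →
      (∃ e ∈ E, x e = 1 ∧ (e.1 = v ∨ e.2 = v)) →
      (interdictedGraph E x).Reachable u v) := by
  classical
  set G := interdictedGraph E x
  have hnet (i : Fin nb) : netInflow E δf i - netInflow E δr i = y i - δκ i := by
    rw [← hbal i, netInflow, netInflow]; ring
  have reach (u : Fin nb) (hu : ∃ e ∈ E, x e = 1 ∧ (e.1 = u ∨ e.2 = u)) :
      G.Reachable u istar := by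
    by_contra hnr
    set S := univ.filter (G.Reachable u)
    have hclosed (e : Fin nb × Fin nb) (he : e ∈ E) (hx : x e = 1) : e.1 ∈ S ↔ e.2 ∈ S := by
      have h12 := interdictedGraph_reachable_of_mem he hx
      simpa [S] using ⟨fun h => h.trans h12, fun h => h.trans h12.symm⟩
    have hcut (f : Fin nb × Fin nb → ℝ) (hf : ∀ e ∈ E, 0 ≤ f e ∧ f e ≤ k * x e) :
        ∑ i ∈ S, netInflow E f i = 0 :=
      sum_netInflow_eq_zero fun e he hne =>
        hclosed e he (eq_one_of_flow_ne_zero (hxbin e) (hf e he) hne)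
    have hsupply (i : Fin nb) (hi : i ∈ S) : 0 < y i - δκ i := by
      obtain ⟨e, he, hx, rfl | rfl⟩ :=
        exists_interdicted_of_interdictedGraph_reachable hu (mem_filter.1 hi).2
      all_goals
        have hne : _ ≠ istar := fun h => hnr (h ▸ (mem_filter.1 hi).2)
        linarith [haux e he, dummyFlow_eq_zero_of_ne hκone hδκ histar hne]
    refine (sum_pos hsupply ⟨u, by simp [S]⟩).ne' ?_
    simp_rw [← hnet, sum_sub_distrib, hcut δf fun e he => (hδ e he).1,
      hcut δr fun e he => (hδ e he).2, sub_zero]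
  exact ⟨reach, fun u v hu hv => (reach u hu).trans (reach v hv).symm⟩

/-- In the single-commodity flow formulation of the topological interdiction
set, any feasible solution is such that every endpoint of an interdicted line
is connected (through the virtual flow, hence via interdicted edges) to the bus
`i*` carrying the chosen dummy edge; in particular, the interdicted edges form
a connected subgraph: any two endpoints of interdicted lines are mutually
reachable in the interdicted subgraph. -/
theorem topological_flow_implies_connected
    {nb : ℕ} (E : Finset (Fin nb × Fin nb)) (k : ℕ)
    (x : Fin nb × Fin nb → ℝ) (y : Fin nb → ℝ) (xκ : Fin nb → ℝ)
    (δf δr : Fin nb × Fin nb → ℝ) (δκ : Fin nb → ℝ)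
    (hxbin : ∀ e, x e = 0 ∨ x e = 1)
    (hybin : ∀ i, y i = 0 ∨ y i = 1)
    (hxκbin : ∀ i, xκ i = 0 ∨ xκ i = 1)
    (hk : ∑ e ∈ E, x e = (k : ℝ))
    (hκone : ∑ i, xκ i = 1)
    (haux : ∀ e ∈ E, x e ≤ y e.1 ∧ x e ≤ y e.2)
    (hδκ : ∀ i, 0 ≤ δκ i ∧ δκ i ≤ (k + 1 : ℝ) * xκ i)
    (hδ : ∀ e ∈ E, (0 ≤ δf e ∧ δf e ≤ (k : ℝ) * x e) ∧
                    (0 ≤ δr e ∧ δr e ≤ (k : ℝ) * x e))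
    (hbal : ∀ i : Fin nb,
      ((∑ e ∈ E.filter (fun e => e.2 = i), δf e) +
       (∑ e ∈ E.filter (fun e => e.1 = i), δr e)) -
      ((∑ e ∈ E.filter (fun e => e.1 = i), δf e) +
       (∑ e ∈ E.filter (fun e => e.2 = i), δr e)) = y i - δκ i)
    (istar : Fin nb) (histar : xκ istar = 1) :
    (∀ u : Fin nb, (∃ e ∈ E, x e = 1 ∧ (e.1 = u ∨ e.2 = u)) →
      (interdictedGraph E x).Reachable u istar) ∧
    (∀ u v : Fin nb, (∃ e ∈ E, x e = 1 ∧ (e.1 = u ∨ e.2 = u)) →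
      (∃ e ∈ E, x e = 1 ∧ (e.1 = v ∨ e.2 = v)) →
      (interdictedGraph E x).Reachable u v) :=
  topological_flow_implies_connected_general E k x y xκ δf δr δκ hxbin hκone haux hδκ hδ hbal istar
    histar
end
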